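/- Let $n \geq 1$, $\lambda = 0$, and let $K$ be a kernel on $\mathbb{R}^n \times \mathbb{R}^n$ satisfying $|K(x,y)| \leq C |x - y|^{-n}$. Let $\sigma, \omega$ be locally finite measures and $Q$ a cube. Then the tail of the testing integral satisfies $\frac{1}{|Q|_{\sigma}} \int_{(3Q)^c} \left( \int_Q |K(x,y)| \, d\sigma(y) \right)^p d\omega(x) \lesssim \mathcal{A}_p(\sigma, \omega)^p$ for every $1 < p < \infty$. -/

import Mathlib

open MeasureTheory Set ENNReal

/-- The axis-parallel half-open cube with corner `a` and sidelength `l`. -/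
def cubeSet {n : ℕ} (a : Fin n → ℝ) (l : ℝ) : Set (Fin n → ℝ) :=
  {x | ∀ i, x i ∈ Set.Ico (a i) (a i + l)}

/-- The concentric triple `3Q` of the cube with corner `a` and sidelength `l`. -/
def tripleCube {n : ℕ} (a : Fin n → ℝ) (l : ℝ) : Set (Fin n → ℝ) :=
  cubeSet (fun i => a i - l) (3 * l)

/-- The two-tailed Muckenhoupt characteristic `𝒜_p(σ,ω)`. -/
noncomputable def tailedAp (n : ℕ) (p p' : ℝ) (σ ω : Measure (Fin n → ℝ)) : ℝ≥0∞ :=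
  ⨆ (a : Fin n → ℝ) (l : ℝ) (_ : 0 < l),
    ((ENNReal.ofReal (l ^ n))⁻¹ *
      ∫⁻ x, ENNReal.ofReal ((l ^ n / (l + Metric.infDist x (cubeSet a l)) ^ n) ^ p) ∂ω) ^ (1 / p) *
    ((ENNReal.ofReal (l ^ n))⁻¹ *
      ∫⁻ x, ENNReal.ofReal ((l ^ n / (l + Metric.infDist x (cubeSet a l)) ^ n) ^ p') ∂σ) ^ (1 / p')

/-!
For `x ∉ 3Q` and `y ∈ Q` some coordinate of `x - y` has size at least `ℓ(Q)`, and also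
`dist(x, Q) ≤ |x - y|`; hence `ℓ(Q) + dist(x, Q) ≤ 2|x - y|` and the size bound gives
`∫_Q |K(x, y)| dσ(y) ≲ σ(Q) ℓ(Q)^{-n} w_Q(x)` with `w_Q(x) = (ℓ(Q) / (ℓ(Q) + dist(x, Q)))^n`.
Raising to the power `p`, integrating in `ω` and dividing by `σ(Q)` leaves
`(|Q|⁻¹ ∫ w_Q^p dω) (|Q|⁻¹ σ(Q))^{p-1}`, and `σ(Q) ≤ ∫ w_Q^{p'} dσ` because `w_Q = 1` on `Q`;
since `p - 1 = p / p'` this is the `p`-th power of the `Q`-term of `𝒜_p(σ, ω)`.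
-/

section Cube

variable {n : ℕ} (a : Fin n → ℝ) (l : ℝ)

lemma cubeSet_eq_pi : cubeSet a l = Set.pi Set.univ (fun i => Set.Ico (a i) (a i + l)) := by
  ext x; simp [cubeSet, Set.mem_pi]

lemma measurableSet_cubeSet : MeasurableSet (cubeSet a l) := by
  rw [cubeSet_eq_pi]; exact MeasurableSet.univ_pi fun _ => measurableSet_Ico

lemma measure_cubeSet_ne_top (σ : Measure (Fin n → ℝ)) [IsLocallyFiniteMeasure σ] :
    σ (cubeSet a l) ≠ ∞ := by
  have hsub : cubeSet a l ⊆ Set.pi Set.univ (fun i => Set.Icc (a i) (a i + l)) := by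
    rw [cubeSet_eq_pi]; exact Set.pi_mono fun _ _ => Set.Ico_subset_Icc_self
  exact ((measure_mono hsub).trans_lt
    (isCompact_univ_pi fun _ => isCompact_Icc).measure_lt_top).ne

variable {a l}

lemma le_dist_of_mem_cubeSet_of_notMem_tripleCube {x y : Fin n → ℝ}
    (hx : x ∉ tripleCube a l) (hy : y ∈ cubeSet a l) : l ≤ dist x y := by
  simp only [tripleCube, cubeSet, Set.mem_ofPred_eq, not_forall, Set.mem_Ico, not_and_or,
    not_le, not_lt] at hx
  obtain ⟨i, hi⟩ := hx
  obtain ⟨hyi₁, hyi₂⟩ := hy i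
  have hcoord : l ≤ |x i - y i| := by
    rcases hi with h | h
    · rw [abs_sub_comm, le_abs]; left; linarith
    · rw [le_abs]; left; linarith
  calc l ≤ |x i - y i| := hcoord
    _ = dist (x i) (y i) := (Real.dist_eq _ _).symm
    _ ≤ dist x y := dist_le_pi_dist x y i

lemma add_infDist_le_two_mul_dist {x y : Fin n → ℝ}
    (hx : x ∉ tripleCube a l) (hy : y ∈ cubeSet a l) :
    l + Metric.infDist x (cubeSet a l) ≤ 2 * dist x y := by
  linarith [Metric.infDist_le_dist_of_mem (x := x) hy,
    le_dist_of_mem_cubeSet_of_notMem_tripleCube hx hy]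

end Cube

noncomputable def cubeTailWeight {n : ℕ} (a : Fin n → ℝ) (l : ℝ) (x : Fin n → ℝ) : ℝ :=
  l ^ n / (l + Metric.infDist x (cubeSet a l)) ^ n

section TailWeight

variable {n : ℕ} {a : Fin n → ℝ} {l : ℝ}

lemma cubeTailWeight_nonneg (hl : 0 ≤ l) (x : Fin n → ℝ) : 0 ≤ cubeTailWeight a l x := by
  unfold cubeTailWeight; have := Metric.infDist_nonneg (x := x) (s := cubeSet a l); positivity

lemma cubeTailWeight_of_mem (hl : 0 < l) {x : Fin n → ℝ} (hx : x ∈ cubeSet a l) :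
    cubeTailWeight a l x = 1 := by
  rw [cubeTailWeight, Metric.infDist_zero_of_mem hx, add_zero, div_self (pow_pos hl n).ne']

lemma measure_cubeSet_le_lintegral_cubeTailWeight (hl : 0 < l) (σ : Measure (Fin n → ℝ))
    (q : ℝ) : σ (cubeSet a l) ≤ ∫⁻ x, ENNReal.ofReal (cubeTailWeight a l x ^ q) ∂σ :=
  calc σ (cubeSet a l) = ∫⁻ x in cubeSet a l, ENNReal.ofReal (cubeTailWeight a l x ^ q) ∂σ := by
        rw [← setLIntegral_one]
        refine setLIntegral_congr_fun (measurableSet_cubeSet a l) fun x hx => ?_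
        rw [cubeTailWeight_of_mem hl hx, Real.one_rpow, ENNReal.ofReal_one]
    _ ≤ _ := setLIntegral_le_lintegral _ _

lemma abs_le_cubeTailWeight_of_notMem_tripleCube {CK : ℝ} (hCK : 0 ≤ CK)
    {K : (Fin n → ℝ) → (Fin n → ℝ) → ℝ} (hK : ∀ x y, x ≠ y → |K x y| ≤ CK / dist x y ^ n)
    (hl : 0 < l) {x y : Fin n → ℝ} (hx : x ∉ tripleCube a l) (hy : y ∈ cubeSet a l) :
    |K x y| ≤ 2 ^ n * CK / l ^ n * cubeTailWeight a l x := by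
  have hd := add_infDist_le_two_mul_dist hx hy
  have hD := Metric.infDist_nonneg (x := x) (s := cubeSet a l)
  have hxy : x ≠ y := by rintro rfl; rw [dist_self] at hd; linarith
  calc |K x y| ≤ CK / dist x y ^ n := hK x y hxy
    _ ≤ CK / ((l + Metric.infDist x (cubeSet a l)) / 2) ^ n := by
        gcongr; linarith
    _ = 2 ^ n * CK / l ^ n * cubeTailWeight a l x := by
        rw [cubeTailWeight, div_pow]; field_simp

lemma measurable_cubeTailWeight : Measurable (cubeTailWeight a l) := by
  unfold cubeTailWeight
  have := (Metric.continuous_infDist_pt (cubeSet a l)).measurable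
  fun_prop

lemma lintegral_cubeSet_le_cubeTailWeight {CK : ℝ} (hCK : 0 ≤ CK)
    {K : (Fin n → ℝ) → (Fin n → ℝ) → ℝ} (hK : ∀ x y, x ≠ y → |K x y| ≤ CK / dist x y ^ n)
    (hl : 0 < l) {x : Fin n → ℝ} (hx : x ∉ tripleCube a l) (σ : Measure (Fin n → ℝ)) :
    ∫⁻ y in cubeSet a l, ENNReal.ofReal |K x y| ∂σ ≤
      ENNReal.ofReal (2 ^ n * CK / l ^ n * cubeTailWeight a l x) * σ (cubeSet a l) :=
  calc _ ≤ ∫⁻ _ in cubeSet a l, ENNReal.ofReal (2 ^ n * CK / l ^ n * cubeTailWeight a l x) ∂σ :=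
        setLIntegral_mono' (measurableSet_cubeSet a l) fun _ hy =>
          ENNReal.ofReal_le_ofReal (abs_le_cubeTailWeight_of_notMem_tripleCube hCK hK hl hx hy)
    _ = _ := setLIntegral_const _ _

lemma lintegral_compl_tripleCube_rpow_le {CK : ℝ} (hCK : 0 ≤ CK)
    {K : (Fin n → ℝ) → (Fin n → ℝ) → ℝ} (hK : ∀ x y, x ≠ y → |K x y| ≤ CK / dist x y ^ n)
    (hl : 0 < l) (σ ω : Measure (Fin n → ℝ)) {p : ℝ} (hp : 0 ≤ p) :
    ∫⁻ x in (tripleCube a l)ᶜ, (∫⁻ y in cubeSet a l, ENNReal.ofReal |K x y| ∂σ) ^ p ∂ω ≤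
      ENNReal.ofReal (2 ^ n * CK) ^ p * ((ENNReal.ofReal (l ^ n))⁻¹ * σ (cubeSet a l)) ^ p *
        ∫⁻ x, ENNReal.ofReal (cubeTailWeight a l x ^ p) ∂ω := by
  set c := ENNReal.ofReal (2 ^ n * CK)
  set M := (ENNReal.ofReal (l ^ n))⁻¹ * σ (cubeSet a l)
  have hsplit : ∀ x, ENNReal.ofReal (2 ^ n * CK / l ^ n * cubeTailWeight a l x) *
      σ (cubeSet a l) = c * M * ENNReal.ofReal (cubeTailWeight a l x) := fun x => by
    rw [ENNReal.ofReal_mul (by positivity), ENNReal.ofReal_div_of_pos (pow_pos hl n),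
      div_eq_mul_inv]
    ring
  calc _ ≤ ∫⁻ x in (tripleCube a l)ᶜ, (c * M * ENNReal.ofReal (cubeTailWeight a l x)) ^ p ∂ω :=
        setLIntegral_mono' (measurableSet_cubeSet _ _).compl fun x hx => by
          rw [← hsplit]
          gcongr
          exact lintegral_cubeSet_le_cubeTailWeight hCK hK hl hx σ
    _ ≤ ∫⁻ x, (c * M * ENNReal.ofReal (cubeTailWeight a l x)) ^ p ∂ω :=
        setLIntegral_le_lintegral _ _
    _ = ∫⁻ x, c ^ p * M ^ p * ENNReal.ofReal (cubeTailWeight a l x ^ p) ∂ω := by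
        simp_rw [ENNReal.mul_rpow_of_nonneg _ _ hp,
          ENNReal.ofReal_rpow_of_nonneg (cubeTailWeight_nonneg hl.le _) hp]
    _ = _ := lintegral_const_mul _ (measurable_cubeTailWeight.pow_const p).ennreal_ofReal

lemma cubeTerm_le_tailedAp (hl : 0 < l) (p p' : ℝ) (σ ω : Measure (Fin n → ℝ)) :
    ((ENNReal.ofReal (l ^ n))⁻¹ * ∫⁻ x, ENNReal.ofReal (cubeTailWeight a l x ^ p) ∂ω) ^ (1 / p) *
      ((ENNReal.ofReal (l ^ n))⁻¹ * ∫⁻ x, ENNReal.ofReal (cubeTailWeight a l x ^ p') ∂σ) ^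
        (1 / p') ≤ tailedAp n p p' σ ω :=
  le_iSup_of_le a <| le_iSup_of_le l <| le_iSup_of_le hl le_rfl

end TailWeight

/-- Since `p - 1 = p / p'`, the left side is `(L U) (L S)^{p-1}`, which grows with `S`. -/
lemma ENNReal.rpow_mul_div_le_rpow_mul_rpow {L S U V : ℝ≥0∞} {p p' : ℝ} (hp : 1 ≤ p)
    (hpp' : 1 / p + 1 / p' = 1) (hS₀ : S ≠ 0) (hS : S ≠ ∞) (hSV : S ≤ V) :
    (L * S) ^ p * U / S ≤ ((L * U) ^ (1 / p) * (L * V) ^ (1 / p')) ^ p := by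
  have hp₀ : p ≠ 0 := by positivity
  have hconj : 1 / p' * p = p - 1 := by
    rw [show 1 / p' = 1 - 1 / p by linarith]; field_simp
  have hsplit : (L * S) ^ p = (L * S) ^ (p - 1) * (L * S) := by
    have := ENNReal.rpow_add_of_nonneg (x := L * S) (p - 1) 1 (by linarith) zero_le_one
    rwa [sub_add_cancel, ENNReal.rpow_one] at this
  calc (L * S) ^ p * U / S = L * U * (L * S) ^ (p - 1) * (S / S) := by
        rw [hsplit, div_eq_mul_inv, div_eq_mul_inv]; ring
    _ = L * U * (L * S) ^ (p - 1) := by rw [ENNReal.div_self hS₀ hS, mul_one]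
    _ ≤ L * U * (L * V) ^ (p - 1) := by gcongr
    _ = _ := by
        rw [ENNReal.mul_rpow_of_nonneg ((L * U) ^ (1 / p)) _ (by linarith), ← ENNReal.rpow_mul, ← ENNReal.rpow_mul,
          one_div_mul_cancel hp₀, hconj, ENNReal.rpow_one]

theorem stmt13_general (n : ℕ) (p p' : ℝ) (hp : 1 < p) (hpp' : 1 / p + 1 / p' = 1)
    (CK : ℝ) (hCK : 0 ≤ CK) :
    ∃ C : ℝ≥0∞, 0 < C ∧ C < ∞ ∧
      ∀ (K : (Fin n → ℝ) → (Fin n → ℝ) → ℝ),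
        (∀ x y, x ≠ y → |K x y| ≤ CK / dist x y ^ n) →
        ∀ (σ ω : Measure (Fin n → ℝ)) [IsLocallyFiniteMeasure σ] [IsLocallyFiniteMeasure ω],
          ∀ (a : Fin n → ℝ) (l : ℝ), 0 < l →
            (∫⁻ x in (tripleCube a l)ᶜ,
                (∫⁻ y in cubeSet a l, ENNReal.ofReal |K x y| ∂σ) ^ p ∂ω) / σ (cubeSet a l)
              ≤ C * tailedAp n p p' σ ω ^ p := by
  have hp₀ : 0 < p := by linarith
  set c := ENNReal.ofReal (2 ^ n * CK)
  refine ⟨c ^ p + 1, zero_lt_one.trans_le le_add_self,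
    ENNReal.add_lt_top.mpr ⟨ENNReal.rpow_lt_top_of_nonneg hp₀.le ENNReal.ofReal_ne_top,
      ENNReal.one_lt_top⟩, ?_⟩
  intro K hK σ ω _ _ a l hl
  rcases eq_or_ne (σ (cubeSet a l)) 0 with hQ₀ | hQ₀
  · simp [Measure.restrict_eq_zero.mpr hQ₀, ENNReal.zero_rpow_of_pos hp₀]
  calc _ ≤ c ^ p * ((ENNReal.ofReal (l ^ n))⁻¹ * σ (cubeSet a l)) ^ p *
          (∫⁻ x, ENNReal.ofReal (cubeTailWeight a l x ^ p) ∂ω) / σ (cubeSet a l) := by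
        gcongr
        exact lintegral_compl_tripleCube_rpow_le hCK hK hl σ ω hp₀.le
    _ = c ^ p * (((ENNReal.ofReal (l ^ n))⁻¹ * σ (cubeSet a l)) ^ p *
          (∫⁻ x, ENNReal.ofReal (cubeTailWeight a l x ^ p) ∂ω) / σ (cubeSet a l)) := by
        rw [mul_assoc, mul_div_assoc, mul_div_assoc]
    _ ≤ c ^ p * tailedAp n p p' σ ω ^ p := by
        gcongr
        exact (ENNReal.rpow_mul_div_le_rpow_mul_rpow hp.le hpp' hQ₀
          (measure_cubeSet_ne_top a l σ) (measure_cubeSet_le_lintegral_cubeTailWeight hl σ p')).trans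
          (ENNReal.rpow_le_rpow (cubeTerm_le_tailedAp hl p p' σ ω) hp₀.le)
    _ ≤ _ := by gcongr; exact le_self_add

/-- The tail of the testing integral over `(3Q)ᶜ` is controlled by `𝒜_p(σ,ω)^p`,
for kernels with Calderón–Zygmund size bound `|K(x,y)| ≤ C_K |x-y|^{-n}`. -/
theorem stmt13 (n : ℕ) (hn : 1 ≤ n) (p p' : ℝ) (hp : 1 < p) (hpp' : 1 / p + 1 / p' = 1)
    (CK : ℝ) (hCK : 0 ≤ CK) :
    ∃ C : ℝ≥0∞, 0 < C ∧ C < ∞ ∧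
      ∀ (K : (Fin n → ℝ) → (Fin n → ℝ) → ℝ),
        (∀ x y, x ≠ y → |K x y| ≤ CK / dist x y ^ n) →
        ∀ (σ ω : Measure (Fin n → ℝ)) [IsLocallyFiniteMeasure σ] [IsLocallyFiniteMeasure ω],
          ∀ (a : Fin n → ℝ) (l : ℝ), 0 < l →
            (∫⁻ x in (tripleCube a l)ᶜ,
                (∫⁻ y in cubeSet a l, ENNReal.ofReal |K x y| ∂σ) ^ p ∂ω) / σ (cubeSet a l)
              ≤ C * tailedAp n p p' σ ω ^ p :=
  stmt13_general n p p' hp hpp' CK hCK
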